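/- Let M = (S, ρ) be a matroid scheme. Its set of bases B(M) satisfies: (B1) B(M) is nonempty; (B2) if x and y are distinct elements of B(M) and a is an atom of S with a ≤ x and a ≰ y, then there exists an atom b of S with b ≤ y, b ≰ x, and (x∖a)∨b a nonempty subset of B(M). -/

import Mathlib

/-!
Bases are the maximal independent elements. The closure of `x`, the greatest element above `x`
of the same rank, exists by (M3) and (M4), and applying (M5) to it rather than to `x` gives
augmentation: if `ρ x < ρ y`, some atom `b ≤ y` raises the rank of `x` by exactly one in every
minimal upper bound of `x` and `b`. Hence all bases have the same, maximal, rank. For bases `x`,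
`y` and an atom `a ≤ x` not below `y`, the complement `c = x ∖ a` is independent of rank one less;
augmenting `c` from `y` yields an atom `b`, and each element of `c ∨ b` is independent of maximal
rank, hence a basis. The atom `b` is not below `x`, since the atoms below `x` are `a` and those
below `c`.
-/

/-- The set of minimal upper bounds of `x` and `y` (denoted `x ∨ y` in the paper). -/
def mub {S : Type*} [PartialOrder S] (x y : S) : Set S :=
  {u | x ≤ u ∧ y ≤ u ∧ ∀ v, x ≤ v → y ≤ v → v ≤ u → v = u}

/-- The set of maximal lower bounds of `x` and `y` (denoted `x ∧ y` in the paper). -/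
def mlb {S : Type*} [PartialOrder S] (x y : S) : Set S :=
  {l | l ≤ x ∧ l ≤ y ∧ ∀ m, m ≤ x → m ≤ y → l ≤ m → m = l}

/-- The set of minimal upper bounds of a subset `T`. -/
def mubSet {S : Type*} [PartialOrder S] (T : Set S) : Set S :=
  {u | (∀ t ∈ T, t ≤ u) ∧ ∀ v, (∀ t ∈ T, t ≤ v) → v ≤ u → v = u}

/-- The number of atoms below `x`, i.e. `|x|`, the rank of `x` in a simplicial poset. -/
noncomputable def natRank {S : Type*} [PartialOrder S] [OrderBot S] (x : S) : ℕ :=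
  Nat.card {a : S // IsAtom a ∧ a ≤ x}

/-- A finite bounded-below poset is simplicial if every lower interval is isomorphic to
the Boolean lattice of subsets of the set of atoms below. -/
def IsSimplicialPoset (S : Type*) [PartialOrder S] [OrderBot S] [Fintype S] : Prop :=
  ∀ x : S, Nonempty (Set.Iic x ≃o Set {a : S // IsAtom a ∧ a ≤ x})

/-- A matroid scheme: a rank function `ρ` on a finite simplicial poset `S`
satisfying (M1)–(M5). -/
structure IsMatroidScheme {S : Type*} [PartialOrder S] [OrderBot S] [Fintype S]
    (ρ : S → ℕ) : Prop where
  simplicial : IsSimplicialPoset S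
  M1 : ∀ x : S, ρ x ≤ natRank x
  M2 : ∀ ⦃x y : S⦄, x ≤ y → ρ x ≤ ρ y
  M3 : ∀ x y u l : S, u ∈ mub x y → l ∈ mlb x y → ρ u + ρ l ≤ ρ x + ρ y
  M4 : ∀ x y l : S, l ∈ mlb x y → ρ x = ρ l → (mub x y).Nonempty
  M5 : ∀ x y : S, ρ x < ρ y →
    ∃ a : S, IsAtom a ∧ a ≤ y ∧ ¬ a ≤ x ∧ (mub x a).Nonempty

/-- `cl` is the closure operator of a matroid scheme `(S, ρ)`:
`cl x` is the greatest element above `x` of the same rank. -/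
def IsClosureFun {S : Type*} [PartialOrder S] (ρ : S → ℕ) (cl : S → S) : Prop :=
  ∀ x : S, x ≤ cl x ∧ ρ (cl x) = ρ x ∧ ∀ y : S, x ≤ y → ρ y = ρ x → y ≤ cl x

/-- The bases of a matroid scheme: the maximal independent elements. -/
def Bases {S : Type*} [PartialOrder S] [OrderBot S] (ρ : S → ℕ) : Set S :=
  {x | ρ x = natRank x ∧ ∀ w, ρ w = natRank w → x ≤ w → w = x}

/-- The circuits of a matroid scheme: the minimal dependent elements. -/
def Circuits {S : Type*} [PartialOrder S] [OrderBot S] (ρ : S → ℕ) : Set S :=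
  {x | ρ x < natRank x ∧ ∀ y, ρ y < natRank y → y ≤ x → y = x}

/-- `c` is the complement `x ∖ a` of `a` in the Boolean lattice `S_{≤ x}`. -/
def IsComplementIn {S : Type*} [PartialOrder S] [OrderBot S] (c a x : S) : Prop :=
  c ≤ x ∧ a ≤ x ∧ (∀ l : S, l ≤ c → l ≤ a → l = ⊥) ∧
    (∀ u : S, u ≤ x → c ≤ u → a ≤ u → u = x)

/-- The rank of a matroid scheme: the common value of `ρ` on maximal elements
(equal to the maximum value of `ρ`). -/
noncomputable def schemeRank {S : Type*} [Fintype S] (ρ : S → ℕ) : ℕ :=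
  sSup (Set.range ρ)

/-- The Tutte polynomial of a matroid scheme, as a two-variable integer function. -/
noncomputable def tutte {S : Type*} [PartialOrder S] [OrderBot S] [Fintype S]
    (ρ : S → ℕ) (x y : ℤ) : ℤ :=
  ∑ w : S, (x - 1) ^ (schemeRank ρ - ρ w) * (y - 1) ^ (natRank w - ρ w)

/-- An element of a poset is an order-atom if it covers a global minimum. -/
def OrdAtom {P : Type*} [PartialOrder P] (a : P) : Prop :=
  ∃ b : P, (∀ z : P, b ≤ z) ∧ b ⋖ a

/-- A partial order is a geometric lattice: it is bounded below, every pair has a least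
upper bound and greatest lower bound, it is atomistic, and it is (upper) semimodular. -/
def IsGeomLatOrder (P : Type*) [PartialOrder P] : Prop :=
  (∃ b : P, ∀ x : P, b ≤ x) ∧
  (∀ x y : P, ∃ u : P, IsLUB {x, y} u) ∧
  (∀ x y : P, ∃ l : P, IsGLB {x, y} l) ∧
  (∀ x : P, IsLUB {a : P | OrdAtom a ∧ a ≤ x} x) ∧
  (∀ x y m j : P, IsGLB {x, y} m → IsLUB {x, y} j → m ⋖ x → y ⋖ j)

/-- A geometric poset: a finite bounded-below poset with rank function `rk`
satisfying (G1) and (G2). -/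
def IsGeometricPoset (P : Type*) [PartialOrder P] [OrderBot P] [Fintype P]
    (rk : P → ℕ) : Prop :=
  rk ⊥ = 0 ∧
  (∀ ⦃x y : P⦄, x ≤ y → rk x ≤ rk y) ∧
  (∀ x y : P, x ⋖ y → rk y = rk x + 1) ∧
  (∀ m : P, IsMax m → IsGeomLatOrder (Set.Iic m)) ∧
  (∀ (x : P) (A : Set P), (∀ a ∈ A, IsAtom a) →
    ∀ y ∈ mubSet A, rk x < rk y → rk y = Nat.card A →
      ∃ a ∈ A, ¬ a ≤ x ∧ ∃ w : P, x ≤ w ∧ a ≤ w)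

theorem OrderIso.isAtomistic {α β : Type*} [PartialOrder α] [OrderBot α] [PartialOrder β]
    [OrderBot β] [IsAtomistic β] (e : α ≃o β) : IsAtomistic α where
  isLUB_atoms b := by
    obtain ⟨s, hs, hatoms⟩ := IsAtomistic.isLUB_atoms (e b)
    refine ⟨e.symm '' s, by rwa [e.symm.isLUB_image, e.symm_symm], ?_⟩
    rintro _ ⟨a, ha, rfl⟩
    exact (e.symm.isAtom_iff a).2 (hatoms a ha)

theorem OrderIso.le_or_le_of_isAtom_of_subset_union {P A : Type*} [PartialOrder P] [OrderBot P]
    (e : P ≃o Set A) {t z w : P} (ht : IsAtom t) (h : e t ⊆ e z ∪ e w) : t ≤ z ∨ t ≤ w := by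
  obtain ⟨p, hp⟩ := Set.isAtom_iff.1 ((e.isAtom_iff t).2 ht)
  rw [hp, Set.singleton_subset_iff] at h
  rw [← e.le_iff_le, ← e.le_iff_le, hp]
  exact h.imp Set.singleton_subset_iff.2 Set.singleton_subset_iff.2

section FinitePoset

variable {S : Type*} [PartialOrder S] [Finite S]

theorem exists_mem_mlb_of_le {x w z : S} (hw : x ≤ w) (hz : x ≤ z) :
    ∃ l ∈ mlb w z, x ≤ l := by
  obtain ⟨l, hxl, hmax⟩ := Finite.exists_le_maximal (p := fun m => m ≤ w ∧ m ≤ z) ⟨hw, hz⟩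
  exact ⟨l, ⟨hmax.1.1, hmax.1.2, fun m hmw hmz hlm => (hmax.2 ⟨hmw, hmz⟩ hlm).antisymm hlm⟩, hxl⟩

theorem mub_nonempty_of_le {x y v : S} (hx : x ≤ v) (hy : y ≤ v) : (mub x y).Nonempty := by
  obtain ⟨u, -, hmin⟩ := Finite.exists_le_minimal (p := fun u => x ≤ u ∧ y ≤ u) ⟨hx, hy⟩
  exact ⟨u, hmin.1.1, hmin.1.2, fun v hxv hyv hvu => hvu.antisymm (hmin.2 ⟨hxv, hyv⟩ hvu)⟩

end FinitePoset

section OrderBot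

variable {S : Type*} [PartialOrder S] [OrderBot S]

theorem bot_mem_mlb_of_isAtom {x b : S} (hb : IsAtom b) (hbx : ¬ b ≤ x) : ⊥ ∈ mlb x b :=
  ⟨bot_le, bot_le, fun _ hmx hmb _ =>
    (hb.le_iff.1 hmb).resolve_right fun hmb => hbx (hmb ▸ hmx)⟩

namespace IsComplementIn

variable {c a x : S} (hc : IsComplementIn c a x)
include hc

theorem mem_mub : x ∈ mub c a :=
  ⟨hc.1, hc.2.1, fun v hcv hav hvx => hc.2.2.2 v hvx hcv hav⟩

theorem bot_mem_mlb : ⊥ ∈ mlb c a :=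
  ⟨bot_le, bot_le, fun m hmc hma _ => hc.2.2.1 m hmc hma⟩

theorem not_le (ha : a ≠ ⊥) : ¬ a ≤ c :=
  fun hac => ha (hc.2.2.1 a hac le_rfl)

end IsComplementIn

theorem natRank_eq_ncard (x : S) : natRank x = {a : S | IsAtom a ∧ a ≤ x}.ncard :=
  Nat.card_coe_set_eq _

theorem natRank_bot : natRank (⊥ : S) = 0 := by
  rw [natRank_eq_ncard, ← Set.ncard_empty S]
  congr
  exact Set.eq_empty_of_forall_notMem fun a ha => ha.1.ne_bot (le_bot_iff.1 ha.2)

theorem IsAtom.natRank_eq_one {a : S} (ha : IsAtom a) : natRank a = 1 := by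
  rw [natRank_eq_ncard, Set.ncard_eq_one]
  exact ⟨a, Set.ext fun t => ⟨fun ⟨ht, hta⟩ => (ha.le_iff.1 hta).resolve_left ht.ne_bot,
    by rintro rfl; exact ⟨ha, le_rfl⟩⟩⟩

end OrderBot

namespace IsSimplicialPoset

variable {S : Type*} [PartialOrder S] [OrderBot S] [Fintype S]

theorem isAtomistic_Iic (hS : IsSimplicialPoset S) (x : S) : IsAtomistic (Set.Iic x) :=
  (Classical.choice (hS x)).isAtomistic

theorem exists_isAtom_le_not_le (hS : IsSimplicialPoset S) {u w : S} (huw : u < w) :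
    ∃ t, IsAtom t ∧ t ≤ w ∧ ¬ t ≤ u := by
  have := hS.isAtomistic_Iic w
  have hwu : ¬ (⊤ : Set.Iic w) ≤ ⟨u, huw.le⟩ := huw.not_ge
  rw [le_iff_atom_le_imp] at hwu
  push Not at hwu
  obtain ⟨t, ht, -, htu⟩ := hwu
  exact ⟨t, ht.of_isAtom_coe_Iic, t.2, htu⟩

theorem natRank_strictMono (hS : IsSimplicialPoset S) : StrictMono (natRank : S → ℕ) := by
  intro u w huw
  obtain ⟨t, ht, htw, htu⟩ := hS.exists_isAtom_le_not_le huw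
  simp only [natRank_eq_ncard]
  exact Set.ncard_lt_ncard ⟨fun a ha => ⟨ha.1, ha.2.trans huw.le⟩, fun h => htu (h ⟨ht, htw⟩).2⟩

theorem le_or_le_of_mem_mub (hS : IsSimplicialPoset S) {x y u t : S} (hu : u ∈ mub x y)
    (ht : IsAtom t) (htu : t ≤ u) : t ≤ x ∨ t ≤ y := by
  obtain ⟨e⟩ := hS u
  obtain ⟨hxu, hyu, hmin⟩ := hu
  set j := e.symm (e ⟨x, hxu⟩ ∪ e ⟨y, hyu⟩)
  have hxj : ⟨x, hxu⟩ ≤ j := e.le_symm_apply.2 Set.subset_union_left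
  have hyj : ⟨y, hyu⟩ ≤ j := e.le_symm_apply.2 Set.subset_union_right
  have htj : ⟨t, htu⟩ ≤ j := by
    change t ≤ (j : S)
    rwa [hmin j hxj hyj j.2]
  exact e.le_or_le_of_isAtom_of_subset_union (ht.Iic htu) (e.le_symm_apply.1 htj)

theorem exists_isComplementIn (hS : IsSimplicialPoset S) {a x : S} (hax : a ≤ x) :
    ∃ c, IsComplementIn c a x := by
  obtain ⟨e⟩ := hS x
  set c := e.symm (e ⟨a, hax⟩)ᶜ
  refine ⟨c, c.2, hax, fun l hlc hla => ?_, fun u hux hcu hau => ?_⟩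
  · have hl : e ⟨l, hla.trans hax⟩ ≤ (e ⟨a, hax⟩)ᶜ ⊓ e ⟨a, hax⟩ :=
      le_inf (e.le_symm_apply.1 hlc) (e.monotone hla)
    rw [compl_inf_self, le_bot_iff, ← e.map_bot, e.apply_eq_iff_eq] at hl
    exact congrArg Subtype.val hl
  · have hu : (e ⟨a, hax⟩)ᶜ ⊔ e ⟨a, hax⟩ ≤ e ⟨u, hux⟩ :=
      sup_le (e.symm_apply_le.1 hcu) (e.monotone hau)
    rw [compl_sup_eq_top, top_le_iff, ← e.map_top, e.apply_eq_iff_eq] at hu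
    exact congrArg Subtype.val hu

theorem natRank_eq_add_one_of_mem_mub (hS : IsSimplicialPoset S) {x b u : S} (hb : IsAtom b)
    (hbx : ¬ b ≤ x) (hu : u ∈ mub x b) : natRank u = natRank x + 1 := by
  have hatoms : {t : S | IsAtom t ∧ t ≤ u} = insert b {t | IsAtom t ∧ t ≤ x} := by
    ext t
    refine ⟨fun ⟨ht, htu⟩ => ?_, ?_⟩
    · refine (hS.le_or_le_of_mem_mub hu ht htu).symm.imp (fun htb => ?_) (fun htx => ⟨ht, htx⟩)
      exact (hb.le_iff.1 htb).resolve_left ht.ne_bot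
    · rintro (rfl | ⟨ht, htx⟩)
      exacts [⟨hb, hu.2.1⟩, ⟨ht, htx.trans hu.1⟩]
  rw [natRank_eq_ncard, natRank_eq_ncard, hatoms, Set.ncard_insert_of_notMem fun h => hbx h.2]

end IsSimplicialPoset

namespace IsMatroidScheme

variable {S : Type*} [PartialOrder S] [OrderBot S] [Fintype S] {ρ : S → ℕ}

theorem map_bot (h : IsMatroidScheme ρ) : ρ ⊥ = 0 :=
  Nat.le_zero.1 (natRank_bot (S := S) ▸ h.M1 ⊥)

theorem le_add_one_of_mem_mub (h : IsMatroidScheme ρ) {x a u : S} (ha : IsAtom a)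
    (hbot : ⊥ ∈ mlb x a) (hu : u ∈ mub x a) : ρ u ≤ ρ x + 1 := by
  have hsub := h.M3 x a u ⊥ hu hbot
  have ha1 : ρ a ≤ 1 := ha.natRank_eq_one ▸ h.M1 a
  rw [h.map_bot] at hsub
  omega

theorem exists_isClosureFun (h : IsMatroidScheme ρ) : ∃ cl : S → S, IsClosureFun ρ cl := by
  suffices ∀ x, ∃ z, x ≤ z ∧ ρ z = ρ x ∧ ∀ w, x ≤ w → ρ w = ρ x → w ≤ z by
    choose cl hcl using this
    exact ⟨cl, hcl⟩
  intro x
  obtain ⟨z, hxz, hzmax⟩ := Finite.exists_le_maximal (p := fun w => x ≤ w ∧ ρ w = ρ x) ⟨le_rfl, rfl⟩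
  have hρz : ρ z = ρ x := hzmax.1.2
  refine ⟨z, hxz, hρz, fun w hxw hw => ?_⟩
  obtain ⟨l, hl, hxl⟩ := exists_mem_mlb_of_le hxw hxz
  have hwl : ρ w = ρ l := le_antisymm (hw ▸ h.M2 hxl) (h.M2 hl.1)
  obtain ⟨v, hv⟩ := h.M4 w z l hl hwl
  have hsub := h.M3 w z v l hv hl
  have hzv : ρ z ≤ ρ v := h.M2 hv.2.1
  have hvz : v ≤ z := hzmax.2 ⟨hxz.trans hv.2.1, by omega⟩ hv.2.1
  exact hv.1.trans hvz

theorem exists_augmenting_atom (h : IsMatroidScheme ρ) {x y : S} (hxy : ρ x < ρ y) :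
    ∃ b, IsAtom b ∧ b ≤ y ∧ ¬ b ≤ x ∧ (mub x b).Nonempty ∧ ∀ u ∈ mub x b, ρ u = ρ x + 1 := by
  obtain ⟨cl, hcl⟩ := h.exists_isClosureFun
  obtain ⟨hxcl, hρcl, hclmax⟩ := hcl x
  obtain ⟨b, hb, hby, hbcl, v, hv⟩ := h.M5 (cl x) y (hρcl ▸ hxy)
  have hbx : ¬ b ≤ x := fun hbx => hbcl (hbx.trans hxcl)
  refine ⟨b, hb, hby, hbx, mub_nonempty_of_le (hxcl.trans hv.1) hv.2.1, fun u hu => ?_⟩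
  have hule := h.le_add_one_of_mem_mub hb (bot_mem_mlb_of_isAtom hb hbx) hu
  have hxu := h.M2 hu.1
  have hne : ρ u ≠ ρ x := fun hux => hbcl (hu.2.1.trans (hclmax u hu.1 hux))
  omega

theorem le_of_mem_bases (h : IsMatroidScheme ρ) {x : S} (hx : x ∈ Bases ρ) (w : S) :
    ρ w ≤ ρ x := by
  by_contra! hlt
  obtain ⟨b, hb, -, hbx, ⟨u, hu⟩, hρu⟩ := h.exists_augmenting_atom hlt
  have hind : ρ u = natRank u := by
    rw [hρu u hu, h.simplicial.natRank_eq_add_one_of_mem_mub hb hbx hu, hx.1]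
  exact hbx (hx.2 u hind hu.1 ▸ hu.2.1)

theorem mem_bases_of_forall_le (h : IsMatroidScheme ρ) {u : S} (hind : ρ u = natRank u)
    (hmax : ∀ w, ρ w ≤ ρ u) : u ∈ Bases ρ := by
  refine ⟨hind, fun w hw huw => huw.eq_or_lt.elim Eq.symm fun hlt => ?_⟩
  have := h.simplicial.natRank_strictMono hlt
  have := hmax w
  omega

theorem bases_nonempty (h : IsMatroidScheme ρ) : (Bases ρ).Nonempty := by
  obtain ⟨x, -, hmax⟩ := Finite.exists_le_maximal (p := fun w : S => ρ w = natRank w)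
    (by rw [h.map_bot, natRank_bot] : ρ ⊥ = natRank ⊥)
  exact ⟨x, hmax.1, fun w hw hxw => (hmax.2 hw hxw).antisymm hxw⟩

end IsMatroidScheme

/-- Proposition 6.5: the bases of a matroid scheme satisfy (B1) and (B2). -/
theorem statement9 {S : Type*} [PartialOrder S] [OrderBot S] [Fintype S]
    (ρ : S → ℕ) (h : IsMatroidScheme ρ) :
    (Bases ρ).Nonempty ∧
    (∀ x y : S, x ∈ Bases ρ → y ∈ Bases ρ → x ≠ y →
      ∀ a : S, IsAtom a → a ≤ x → ¬ a ≤ y →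
        ∃ b : S, IsAtom b ∧ b ≤ y ∧ ¬ b ≤ x ∧
          ∃ c : S, IsComplementIn c a x ∧ (mub c b).Nonempty ∧ mub c b ⊆ Bases ρ) := by
  refine ⟨h.bases_nonempty, fun x y hx hy _ a ha hax hay => ?_⟩
  obtain ⟨c, hc⟩ := h.simplicial.exists_isComplementIn hax
  have hac : ¬ a ≤ c := hc.not_le ha.ne_bot
  -- `ρ x ≤ ρ c + 1 ≤ natRank c + 1 = natRank x = ρ x`: `c` is independent of rank `ρ x - 1`
  have hρx := h.le_add_one_of_mem_mub ha hc.bot_mem_mlb hc.mem_mub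
  have hρc := h.M1 c
  have hrank_x := h.simplicial.natRank_eq_add_one_of_mem_mub ha hac hc.mem_mub
  have hx_ind : ρ x = natRank x := hx.1
  have hρy : ρ y = ρ x := le_antisymm (h.le_of_mem_bases hx y) (h.le_of_mem_bases hy x)
  obtain ⟨b, hb, hby, hbc, hne, hρu⟩ := h.exists_augmenting_atom (x := c) (y := y) (by omega)
  have hbx : ¬ b ≤ x := fun hbx =>
    (h.simplicial.le_or_le_of_mem_mub hc.mem_mub hb hbx).elim hbc
      fun hba => hay ((ha.le_iff.1 hba).resolve_left hb.ne_bot ▸ hby)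
  refine ⟨b, hb, hby, hbx, c, hc, hne, fun u hu => h.mem_bases_of_forall_le ?_ ?_⟩
  · rw [hρu u hu, h.simplicial.natRank_eq_add_one_of_mem_mub hb hbc hu]
    omega
  · intro w
    have := h.le_of_mem_bases hx w
    have := hρu u hu
    omega
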